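/- Let f : I × G → ℝⁿ be continuous, where I ⊆ ℝ and G ⊆ ℝⁿ are open, and let (x₀,y₀) ∈ I × G. Then there exist an interval J ⊆ I containing x₀ and a continuously differentiable function y : J → G with y(x₀) = y₀ and y'(x) = f(x, y(x)) for all x ∈ J. -/

import Mathlib

/-!
Near `(x₀, y₀)` the field can be replaced by `f ∘ ρ`, where `ρ` is the radial retraction of
`ℝ × ℝⁿ` onto a closed ball inside `I × G`; this is continuous on all of `ℝ × ℝⁿ`, bounded by
some `M`, and agrees with `f` on the ball.

For such a field Tonelli's delayed equation `y x = y₀ + ∫ t in x₀..x, F t (y (t - d))` is solved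
explicitly, interval of length `d` after interval of length `d`. These solutions are
`M`-Lipschitz with value `y₀` at `x₀`, so by Arzelà–Ascoli a sequence of them with `d → 0` has a
locally uniformly convergent subsequence, and dominated convergence carries the delayed equation
to the integral equation of the limit. On `[x₀, x₀ + r / (M + 1)]` the limit stays in the ball,
where `f ∘ ρ = f`.
-/
open Set Metric Filter Topology Function intervalIntegral
open scoped NNReal

section Retraction

variable {V : Type*} [NormedAddCommGroup V] [NormedSpace ℝ V]

noncomputable def radialRetraction (c : V) (r : ℝ) (v : V) : V :=
  c + (r / max r ‖v - c‖) • (v - c)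

variable {c : V} {r : ℝ}

lemma continuous_radialRetraction (hr : 0 < r) : Continuous (radialRetraction c r) := by
  unfold radialRetraction
  have hden : ∀ v : V, max r ‖v - c‖ ≠ 0 := fun v => (lt_max_of_lt_left hr).ne'
  fun_prop (disch := exact hden _)

lemma radialRetraction_mem_closedBall (hr : 0 < r) (v : V) :
    radialRetraction c r v ∈ closedBall c r := by
  have hmax : 0 < max r ‖v - c‖ := lt_max_of_lt_left hr
  rw [mem_closedBall, dist_eq_norm, radialRetraction, add_sub_cancel_left, norm_smul,
    Real.norm_of_nonneg (by positivity), div_mul_eq_mul_div, div_le_iff₀ hmax]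
  exact mul_le_mul_of_nonneg_left (le_max_right _ _) hr.le

lemma radialRetraction_of_mem_closedBall (hr : 0 < r) {v : V} (hv : v ∈ closedBall c r) :
    radialRetraction c r v = v := by
  rw [mem_closedBall, dist_eq_norm] at hv
  simp [radialRetraction, max_eq_left hv, div_self hr.ne']

theorem ContinuousOn.exists_bounded_continuous_eqOn_closedBall [ProperSpace V]
    {W : Type*} [NormedAddCommGroup W] {g : V → W} (hr : 0 < r)
    (hg : ContinuousOn g (closedBall c r)) :
    ∃ G : V → W, Continuous G ∧ (∃ M : ℝ≥0, ∀ v, ‖G v‖ ≤ M) ∧ EqOn G g (closedBall c r) := by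
  obtain ⟨C, hC⟩ := (isCompact_closedBall c r).exists_bound_of_continuousOn hg
  refine ⟨g ∘ radialRetraction c r, ?_, ⟨C.toNNReal, fun v => ?_⟩, fun v hv => ?_⟩
  · exact hg.comp_continuous (continuous_radialRetraction hr)
      (radialRetraction_mem_closedBall hr)
  · exact (hC _ (radialRetraction_mem_closedBall hr v)).trans (Real.le_coe_toNNReal C)
  · rw [comp_apply, radialRetraction_of_mem_closedBall hr hv]

end Retraction

theorem ContinuousMap.isCompact_setOf_lipschitzWith_apply_eq {X Y : Type*} [PseudoMetricSpace X]
    [MetricSpace Y] [ProperSpace Y] (K : ℝ≥0) (x₀ : X) (y₀ : Y) :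
    IsCompact {g : C(X, Y) | LipschitzWith K g ∧ g x₀ = y₀} := by
  refine ArzelaAscoli.isCompact_of_equicontinuous _ ?_
    (LipschitzWith.uniformEquicontinuous _ K fun g => g.2.1).equicontinuous
  have himage : ContinuousMap.toFun '' {g : C(X, Y) | LipschitzWith K g ∧ g x₀ = y₀}
      = {g : X → Y | LipschitzWith K g ∧ g x₀ = y₀} := by
    ext g
    refine ⟨?_, fun hg => ⟨⟨g, hg.1.continuous⟩, hg, rfl⟩⟩
    rintro ⟨g, hg, rfl⟩
    exact hg
  rw [himage]
  refine (isCompact_univ_pi fun x => isCompact_closedBall y₀ (K * dist x x₀)).of_isClosed_subset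
    ((isClosed_setOfPred_lipschitzWith K).inter (isClosed_eq (continuous_apply x₀)
      continuous_const)) ?_
  rintro g ⟨hg, hgx₀⟩ x -
  rw [mem_closedBall, ← hgx₀]
  exact hg.dist_le_mul x x₀

variable {E : Type*} [NormedAddCommGroup E] [NormedSpace ℝ E]

lemma lipschitzWith_integral_of_norm_le {g : ℝ → E} {M : ℝ≥0}
    (hg : Continuous g) (hM : ∀ t, ‖g t‖ ≤ M) (a : ℝ) :
    LipschitzWith M fun x => ∫ t in a..x, g t := by
  refine LipschitzWith.of_dist_le_mul fun x x' => ?_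
  rw [dist_eq_norm, integral_interval_sub_left (hg.intervalIntegrable _ _)
    (hg.intervalIntegrable _ _), Real.dist_eq]
  exact norm_integral_le_of_norm_le_const fun t _ => hM t

/-- The `j`-th iterate solves `y x = y₀ + ∫ t in x₀..x, F t (y (t - d))` for `x₀ ≤ x ≤ x₀ + j * d`;
it is constant `y₀` to the left of `x₀`. -/
noncomputable def tonelliApprox (F : ℝ → E → E) (x₀ : ℝ) (y₀ : E) (d : ℝ) : ℕ → ℝ → E
  | 0 => fun _ => y₀
  | j + 1 => fun x => y₀ + ∫ t in x₀..max x x₀, F t (tonelliApprox F x₀ y₀ d j (t - d))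

section Tonelli

variable {F : ℝ → E → E} {x₀ : ℝ} {y₀ : E} {d : ℝ}

lemma tonelliApprox_apply_self (j : ℕ) : tonelliApprox F x₀ y₀ d j x₀ = y₀ := by
  cases j <;> simp [tonelliApprox]

lemma tonelliApprox_succ_eq (hd : 0 ≤ d) (j : ℕ) {x : ℝ} (hx : x ≤ x₀ + j * d) :
    tonelliApprox F x₀ y₀ d (j + 1) x = tonelliApprox F x₀ y₀ d j x := by
  induction j generalizing x with
  | zero =>
    simp only [Nat.cast_zero, zero_mul, add_zero] at hx
    simp [tonelliApprox, max_eq_right hx]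
  | succ j ih =>
    refine congrArg (y₀ + ·) (integral_congr fun t ht => ?_)
    rw [uIcc_of_le (le_max_right _ _)] at ht
    have : max x x₀ ≤ x₀ + (j + 1) * d := max_le (by exact_mod_cast hx) (by nlinarith)
    exact congrArg (F t) (ih (by linarith [ht.2]))

lemma tonelliApprox_succ_eq_integral (hd : 0 ≤ d) (j : ℕ) {x : ℝ} (hx₀ : x₀ ≤ x)
    (hx : x ≤ x₀ + (j + 1) * d) :
    tonelliApprox F x₀ y₀ d (j + 1) x
      = y₀ + ∫ t in x₀..x, F t (tonelliApprox F x₀ y₀ d (j + 1) (t - d)) := by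
  conv_lhs => rw [tonelliApprox]; beta_reduce; rw [max_eq_left hx₀]
  refine congrArg (y₀ + ·) (integral_congr fun t ht => ?_)
  rw [uIcc_of_le hx₀] at ht
  exact congrArg (F t) (tonelliApprox_succ_eq hd j (by linarith [ht.2])).symm

variable {M : ℝ≥0}

lemma lipschitzWith_tonelliApprox (hF : Continuous (uncurry F)) (hM : ∀ t v, ‖F t v‖ ≤ M)
    (j : ℕ) : LipschitzWith M (tonelliApprox F x₀ y₀ d j) := by
  induction j with
  | zero => exact LipschitzWith.const' y₀
  | succ j ih =>
    have hP := (lipschitzWith_integral_of_norm_le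
      (g := fun t => F t (tonelliApprox F x₀ y₀ d j (t - d)))
      (hF.comp₂ continuous_id (ih.continuous.comp (continuous_sub_right d)))
      (fun t => hM t _) x₀).comp (LipschitzWith.id.max_const x₀)
    rw [mul_one] at hP
    exact LipschitzWith.of_dist_le_mul fun x x' => by
      simpa only [tonelliApprox, dist_add_left, comp_apply, id] using hP.dist_le_mul x x'

end Tonelli

lemma continuous_integral_comp_sub {F : ℝ → E → E} {M : ℝ} (hF : Continuous (uncurry F))
    (hM : ∀ t v, ‖F t v‖ ≤ M) (a b : ℝ) :
    Continuous fun p : C(ℝ, E) × ℝ => ∫ t in a..b, F t (p.1 (t - p.2)) := by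
  have hcont : Continuous fun q : (C(ℝ, E) × ℝ) × ℝ => F q.2 (q.1.1 (q.2 - q.1.2)) :=
    hF.comp₂ continuous_snd (continuous_eval.comp₂ (continuous_fst.comp continuous_fst)
      (continuous_snd.sub (continuous_snd.comp continuous_fst)))
  refine continuous_of_dominated_interval (bound := fun _ => M)
    (fun p => (hcont.comp (Continuous.prodMk_right p)).aestronglyMeasurable)
    (fun p => MeasureTheory.ae_of_all _ fun t _ => hM _ _) intervalIntegrable_const
    (MeasureTheory.ae_of_all _ fun t _ => hcont.comp (Continuous.prodMk_left t))

theorem exists_lipschitzWith_eq_integral [ProperSpace E] {F : ℝ → E → E} {M : ℝ≥0}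
    (hF : Continuous (uncurry F)) (hM : ∀ t v, ‖F t v‖ ≤ M) (x₀ : ℝ) (y₀ : E) {α : ℝ}
    (hα : 0 ≤ α) :
    ∃ y : ℝ → E, LipschitzWith M y ∧ ∀ x ∈ Icc x₀ (x₀ + α), y x = y₀ + ∫ t in x₀..x, F t (y t) := by
  let d : ℕ → ℝ := fun k => α / (k + 1)
  let w : ℕ → C(ℝ, E) := fun k =>
    ⟨tonelliApprox F x₀ y₀ (d k) (k + 1), (lipschitzWith_tonelliApprox hF hM _).continuous⟩
  obtain ⟨y, ⟨hyM, -⟩, φ, hφ, hwy⟩ :=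
    (ContinuousMap.isCompact_setOf_lipschitzWith_apply_eq M x₀ y₀).tendsto_subseq (x := w)
      fun k => ⟨lipschitzWith_tonelliApprox hF hM _, tonelliApprox_apply_self _⟩
  have hd : Tendsto (d ∘ φ) atTop (𝓝 0) := by
    have : Tendsto d atTop (𝓝 0) := by
      simpa [d, comp_def] using
        (tendsto_const_div_atTop_nhds_zero_nat α).comp (tendsto_add_atTop_nat 1)
    exact this.comp hφ.tendsto_atTop
  refine ⟨y, hyM, fun x hx =>
    tendsto_nhds_unique ((continuous_eval_const x).tendsto y |>.comp hwy) ?_⟩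
  have hw : ∀ k, w k x = y₀ + ∫ t in x₀..x, F t (w k (t - d k)) := fun k =>
    tonelliApprox_succ_eq_integral (by positivity) k hx.1 (by
      rw [mul_div_cancel₀ _ (by positivity)]; exact hx.2)
  have hlim := (continuous_integral_comp_sub hF hM x₀ x).tendsto (y, 0)
  simpa [comp_def, hw] using tendsto_const_nhds.add (hlim.comp (hwy.prodMk_nhds hd))

theorem exists_hasDerivWithinAt_of_norm_le [ProperSpace E] {F : ℝ → E → E} {M : ℝ≥0}
    (hF : Continuous (uncurry F)) (hM : ∀ t v, ‖F t v‖ ≤ M) (x₀ : ℝ) (y₀ : E) {α : ℝ}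
    (hα : 0 ≤ α) :
    ∃ y : ℝ → E, y x₀ = y₀ ∧ LipschitzWith M y ∧
      ∀ x ∈ Icc x₀ (x₀ + α), HasDerivWithinAt y (F x (y x)) (Icc x₀ (x₀ + α)) x := by
  obtain ⟨y, hyM, hy⟩ := exists_lipschitzWith_eq_integral hF hM x₀ y₀ hα
  have hg : Continuous fun t => F t (y t) := hF.comp₂ continuous_id hyM.continuous
  refine ⟨y, by simpa using hy x₀ (left_mem_Icc.2 (by linarith)), hyM, fun x hx => ?_⟩
  exact ((hg.integral_hasStrictDerivAt x₀ x).hasDerivAt.const_add y₀).hasDerivWithinAt.congr_of_mem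
    hy hx

/-- Peano's existence theorem: a continuous right-hand side admits a local
solution of the Cauchy problem. -/
theorem peano_existence (n : ℕ) (I : Set ℝ) (G : Set (Fin n → ℝ))
    (hI : IsOpen I) (hG : IsOpen G)
    (f : ℝ → (Fin n → ℝ) → (Fin n → ℝ))
    (hf : ContinuousOn (fun p : ℝ × (Fin n → ℝ) => f p.1 p.2) (I ×ˢ G))
    (x₀ : ℝ) (y₀ : Fin n → ℝ) (hx₀ : x₀ ∈ I) (hy₀ : y₀ ∈ G) :
    ∃ α > 0, Set.Icc x₀ (x₀ + α) ⊆ I ∧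
      ∃ y : ℝ → (Fin n → ℝ), y x₀ = y₀ ∧
        ∀ x ∈ Set.Icc x₀ (x₀ + α), y x ∈ G ∧
          HasDerivWithinAt y (f x (y x)) (Set.Icc x₀ (x₀ + α)) x := by
  obtain ⟨r, hr, hball⟩ : ∃ r > 0, closedBall (x₀, y₀) r ⊆ I ×ˢ G :=
    nhds_basis_closedBall.mem_iff.1 ((hI.prod hG).mem_nhds ⟨hx₀, hy₀⟩)
  obtain ⟨F, hF, ⟨M, hM⟩, hFf⟩ := (hf.mono hball).exists_bounded_continuous_eqOn_closedBall hr
  set α := r / (M + 1)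
  have hα : 0 < α := by positivity
  have hαr : α ≤ r := div_le_self hr.le (by simp)
  have hMα : M * α ≤ r := by
    rw [mul_div_assoc']
    exact div_le_of_le_mul₀ (by positivity) hr.le (by nlinarith)
  obtain ⟨y, hy₀, hyM, hy⟩ :=
    exists_hasDerivWithinAt_of_norm_le (F := curry F) hF (fun t v => hM (t, v)) x₀ y₀ hα.le
  have hmem : ∀ x ∈ Icc x₀ (x₀ + α), (x, y x) ∈ closedBall (x₀, y₀) r := by
    intro x hx
    have hxx₀ : dist x x₀ ≤ α := by
      rw [Real.dist_eq, abs_of_nonneg (by linarith [hx.1])]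
      linarith [hx.2]
    rw [← closedBall_prod_same]
    refine ⟨hxx₀.trans hαr, ?_⟩
    rw [mem_closedBall, ← hy₀]
    exact (hyM.dist_le_mul x x₀).trans ((mul_le_mul_of_nonneg_left hxx₀ M.2).trans hMα)
  refine ⟨α, hα, fun x hx => (hball (hmem x hx)).1, y, hy₀, fun x hx =>
    ⟨(hball (hmem x hx)).2, ?_⟩⟩
  simpa only [curry_apply, hFf (hmem x hx)] using hy x hx
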